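/- (Uniform bound for shifted basic hypergeometric series) Let 0 < q < 1, let r ≥ 1 and let a, a_1, …, a_r, b_1, …, b_r, x be complex numbers with max{|b_1|, …, |b_r|, |x|} < 1, and let n be a nonnegative integer. Then |_{r+1}φ_r(a, a_1 q^n, …, a_r q^n; b_1 q^n, …, b_r q^n; q, x)| ≤ (−|ax|; q)_∞ (−|a_1|; q)_∞ ⋯ (−|a_r|; q)_∞ / ((|x|; q)_∞ (|b_1|; q)_∞ ⋯ (|b_r|; q)_∞), where _{r+1}φ_r(a, a_1 q^n, …, a_r q^n; b_1 q^n, …, b_r q^n; q, x) = Σ_{k=0}^∞ (a; q)_k (a_1 q^n; q)_k ⋯ (a_r q^n; q)_k x^k / ((q; q)_k (b_1 q^n; q)_k ⋯ (b_r q^n; q)_k). -/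

import Mathlib

open Complex

/-- The finite q-shifted factorial `(a; q)_n`. -/
noncomputable def qPoch (q a : ℂ) (n : ℕ) : ℂ := ∏ k ∈ Finset.range n, (1 - a * q ^ k)

/-- The infinite q-shifted factorial `(a; q)_∞`. -/
noncomputable def qPochInf (q a : ℂ) : ℂ := ∏' k : ℕ, (1 - a * q ^ k)

/-- The theta symbol `Δ(u, v) = v (q; q)_∞ (u/v; q)_∞ (qv/u; q)_∞`. -/
noncomputable def thetaDelta (q u v : ℂ) : ℂ :=
  v * qPochInf q q * qPochInf q (u / v) * qPochInf q (q * v / u)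

/-- The Thomae–Jackson q-integral `∫_u^v f(x) d_q x`. -/
noncomputable def qIntegral (q u v : ℂ) (f : ℂ → ℂ) : ℂ :=
  (1 - q) * ∑' n : ℕ, (v * f (v * q ^ n) - u * f (u * q ^ n)) * q ^ n

/-- The basic hypergeometric series `₃φ₂(a₁, a₂, a₃; b₁, b₂; q, z)`. -/
noncomputable def phi32 (q a₁ a₂ a₃ b₁ b₂ z : ℂ) : ℂ :=
  ∑' n : ℕ, qPoch q a₁ n * qPoch q a₂ n * qPoch q a₃ n * z ^ n /
    (qPoch q q n * qPoch q b₁ n * qPoch q b₂ n)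

/-- The real infinite q-shifted factorial `(a; q)_∞` for real `q`, `a`. -/
noncomputable def qPochInfR (q a : ℝ) : ℝ := ∏' k : ℕ, (1 - a * q ^ k)

set_option maxHeartbeats 1000000

section auxQB
open Finset Filter Real
open Complex Finset Filter Real

lemma factor_pos {q : ℝ} (hq0 : 0 < q) (hq1 : q < 1) {a : ℝ} (ha : a < 1) (k : ℕ) :
    0 < 1 - a * q ^ k := by
  have h1 : (0:ℝ) < q ^ k := pow_pos hq0 k
  have h2 : q ^ k ≤ 1 := pow_le_one₀ hq0.le hq1.le
  rcases le_or_gt a 0 with h | h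
  · nlinarith
  · nlinarith

lemma factor_lb {q : ℝ} (hq0 : 0 < q) (hq1 : q < 1) {a : ℝ} (ha : a < 1) (k : ℕ) :
    min 1 (1 - a) ≤ 1 - a * q ^ k := by
  have h1 : (0:ℝ) < q ^ k := pow_pos hq0 k
  have h2 : q ^ k ≤ 1 := pow_le_one₀ hq0.le hq1.le
  rcases le_or_gt a 0 with h | h
  · exact le_trans (min_le_left _ _) (by nlinarith)
  · exact le_trans (min_le_right _ _) (by nlinarith)

lemma summable_geom_mul {q : ℝ} (hq0 : 0 < q) (hq1 : q < 1) (c : ℝ) :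
    Summable (fun k : ℕ => c * q ^ k) :=
  (summable_geometric_of_lt_one hq0.le hq1).mul_left c

lemma summable_log_factor {q : ℝ} (hq0 : 0 < q) (hq1 : q < 1) {a : ℝ} (ha : a < 1) :
    Summable (fun k : ℕ => Real.log (1 - a * q ^ k)) := by
  set ε := min 1 (1 - a) with hε
  have hε0 : 0 < ε := lt_min one_pos (by linarith)
  have hε1 : ε ≤ 1 := min_le_left _ _
  apply Summable.of_norm_bounded (g := fun k => (|a| * q ^ k) / ε)
    ((summable_geom_mul hq0 hq1 |a|).div_const ε)
  intro k
  have hqk : (0:ℝ) < q ^ k := pow_pos hq0 k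
  have hv0 : 0 < 1 - a * q ^ k := factor_pos hq0 hq1 ha k
  have hvε : ε ≤ 1 - a * q ^ k := factor_lb hq0 hq1 ha k
  have haq : a * q ^ k ≤ |a| * q ^ k := by
    have := le_abs_self a
    nlinarith
  have hN0 : 0 ≤ |a| * q ^ k := by positivity
  rw [Real.norm_eq_abs, abs_le]
  constructor
  · have h2 : Real.log (1 - a * q ^ k)⁻¹ ≤ (1 - a * q ^ k)⁻¹ - 1 :=
      Real.log_le_sub_one_of_pos (inv_pos.2 hv0)
    rw [Real.log_inv] at h2
    have h3 : (1 - a * q ^ k)⁻¹ - 1 ≤ (|a| * q ^ k) / ε := by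
      rw [inv_eq_one_div, div_sub' hv0.ne', div_le_div_iff₀ hv0 hε0]
      nlinarith
    linarith
  · have h1 : Real.log (1 - a * q ^ k) ≤ (1 - a * q ^ k) - 1 :=
      Real.log_le_sub_one_of_pos hv0
    have : (1 - a * q ^ k) - 1 ≤ (|a| * q ^ k) / ε := by
      rw [le_div_iff₀ hε0]
      nlinarith [neg_abs_le a, mul_pos hqk hε0]
    linarith

lemma multipliable_factor {q : ℝ} (hq0 : 0 < q) (hq1 : q < 1) {a : ℝ} (ha : a < 1) :
    Multipliable (fun k : ℕ => 1 - a * q ^ k) := by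
  exact Real.multipliable_of_summable_log (fun k => factor_pos hq0 hq1 ha k)
    (summable_log_factor hq0 hq1 ha)

lemma qPochInfR_pos' {q : ℝ} (hq0 : 0 < q) (hq1 : q < 1) {a : ℝ} (ha : a < 1) :
    0 < ∏' k : ℕ, (1 - a * q ^ k) := by
  have := Real.rexp_tsum_eq_tprod (fun k => factor_pos hq0 hq1 ha k)
    (summable_log_factor hq0 hq1 ha)
  rw [← this]
  exact Real.exp_pos _

lemma tendsto_partial_prod {q : ℝ} (hq0 : 0 < q) (hq1 : q < 1) {a : ℝ} (ha : a < 1) :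
    Tendsto (fun m => ∏ i ∈ range m, (1 - a * q ^ i)) atTop
      (nhds (∏' k : ℕ, (1 - a * q ^ k))) :=
  (multipliable_factor hq0 hq1 ha).hasProd.tendsto_prod_nat


-- products of factors in [0,1] decrease; of factors ≥ 1 increase
lemma prod_anti {f : ℕ → ℝ} (h0 : ∀ i, 0 ≤ f i) (h1 : ∀ i, f i ≤ 1)
    {k m : ℕ} (hkm : k ≤ m) : ∏ i ∈ range m, f i ≤ ∏ i ∈ range k, f i := by
  induction m, hkm using Nat.le_induction with
  | base => exact le_refl _
  | succ m hm ih =>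
    rw [Finset.prod_range_succ]
    have hP : 0 ≤ ∏ i ∈ range m, f i := Finset.prod_nonneg fun i _ => h0 i
    nlinarith [h0 m, h1 m]

lemma prod_mono {f : ℕ → ℝ} (h1 : ∀ i, 1 ≤ f i)
    {k m : ℕ} (hkm : k ≤ m) : ∏ i ∈ range k, f i ≤ ∏ i ∈ range m, f i := by
  induction m, hkm using Nat.le_induction with
  | base => exact le_refl _
  | succ m hm ih =>
    rw [Finset.prod_range_succ]
    have hP : 0 < ∏ i ∈ range m, f i :=
      Finset.prod_pos fun i _ => lt_of_lt_of_le one_pos (h1 i)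
    nlinarith [h1 m]

lemma tprod_le_partial {q : ℝ} (hq0 : 0 < q) (hq1 : q < 1) {a : ℝ} (ha0 : 0 ≤ a)
    (ha : a < 1) (k : ℕ) :
    ∏' i : ℕ, (1 - a * q ^ i) ≤ ∏ i ∈ range k, (1 - a * q ^ i) := by
  apply le_of_tendsto (tendsto_partial_prod hq0 hq1 ha)
  filter_upwards [eventually_ge_atTop k] with m hm
  apply prod_anti (fun i => (factor_pos hq0 hq1 ha i).le)
    (fun i => by nlinarith [pow_pos hq0 i]) hm

lemma partial_le_tprod {q : ℝ} (hq0 : 0 < q) (hq1 : q < 1) {a : ℝ} (ha0 : a ≤ 0) (k : ℕ) :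
    ∏ i ∈ range k, (1 - a * q ^ i) ≤ ∏' i : ℕ, (1 - a * q ^ i) := by
  apply ge_of_tendsto (tendsto_partial_prod hq0 hq1 (by linarith))
  filter_upwards [eventually_ge_atTop k] with m hm
  apply _root_.prod_mono (fun i => by nlinarith [pow_pos hq0 i]) hm


noncomputable def cseq (q c : ℝ) (k : ℕ) : ℝ :=
  (∏ i ∈ range k, (1 - (-c) * q ^ i)) / (∏ i ∈ range k, (1 - q * q ^ i))

noncomputable def Sq (q c t : ℝ) : ℝ := ∑' k : ℕ, cseq q c k * t ^ k

section core
variable {q c : ℝ}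

lemma den_pos (hq0 : 0 < q) (hq1 : q < 1) (k : ℕ) :
    0 < ∏ i ∈ range k, (1 - q * q ^ i) :=
  Finset.prod_pos fun i _ => factor_pos hq0 hq1 hq1 i

lemma num_pos (hq0 : 0 < q) (hc : 0 ≤ c) (k : ℕ) :
    0 < ∏ i ∈ range k, (1 - (-c) * q ^ i) :=
  Finset.prod_pos fun i _ => by nlinarith [pow_pos hq0 i]

lemma cseq_pos (hq0 : 0 < q) (hq1 : q < 1) (hc : 0 ≤ c) (k : ℕ) : 0 < cseq q c k :=
  div_pos (num_pos hq0 hc k) (den_pos hq0 hq1 k)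

lemma cseq_zero : cseq q c 0 = 1 := by simp [cseq]

lemma cseq_rec (hq0 : 0 < q) (hq1 : q < 1) (k : ℕ) :
    cseq q c (k + 1) * (1 - q * q ^ k) = cseq q c k * (1 - (-c) * q ^ k) := by
  have hd := den_pos hq0 hq1 k
  have hdk := factor_pos hq0 hq1 hq1 k
  have hdk' := hdk.ne'
  unfold cseq
  rw [Finset.prod_range_succ, Finset.prod_range_succ, ← div_div, div_mul_cancel₀ _ hdk']
  ring

lemma cseq_le (hq0 : 0 < q) (hq1 : q < 1) (hc : 0 ≤ c) (k : ℕ) :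
    cseq q c k ≤ (∏' i : ℕ, (1 - (-c) * q ^ i)) / (∏' i : ℕ, (1 - q * q ^ i)) := by
  have h1 : ∏ i ∈ range k, (1 - (-c) * q ^ i) ≤ ∏' i : ℕ, (1 - (-c) * q ^ i) :=
    partial_le_tprod hq0 hq1 (by linarith) k
  have h2 : ∏' i : ℕ, (1 - q * q ^ i) ≤ ∏ i ∈ range k, (1 - q * q ^ i) :=
    tprod_le_partial hq0 hq1 hq0.le hq1 k
  have h3 : 0 < ∏' i : ℕ, (1 - q * q ^ i) := qPochInfR_pos' hq0 hq1 hq1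
  exact div_le_div₀ (le_trans (num_pos hq0 hc k).le h1) h1 h3 h2

lemma summable_cseq (hq0 : 0 < q) (hq1 : q < 1) (hc : 0 ≤ c) {t : ℝ}
    (ht0 : 0 ≤ t) (ht1 : t < 1) : Summable (fun k : ℕ => cseq q c k * t ^ k) := by
  set M := (∏' i : ℕ, (1 - (-c) * q ^ i)) / (∏' i : ℕ, (1 - q * q ^ i)) with hM
  apply Summable.of_nonneg_of_le
    (fun k => mul_nonneg (cseq_pos hq0 hq1 hc k).le (pow_nonneg ht0 k))
    (fun k => ?_) ((summable_geometric_of_lt_one ht0 ht1).mul_left M)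
  have := cseq_le hq0 hq1 hc k
  have ht : (0:ℝ) ≤ t ^ k := pow_nonneg ht0 k
  nlinarith [cseq_pos hq0 hq1 hc k]

end core


section core2
variable {q c : ℝ}

lemma Sq_ge_one (hq0 : 0 < q) (hq1 : q < 1) (hc : 0 ≤ c) {t : ℝ}
    (ht0 : 0 ≤ t) (ht1 : t < 1) : 1 ≤ Sq q c t := by
  have hs := summable_cseq hq0 hq1 hc ht0 ht1
  have h0 : cseq q c 0 * t ^ 0 = 1 := by simp [cseq_zero]
  calc (1:ℝ) = cseq q c 0 * t ^ 0 := h0.symm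
    _ ≤ Sq q c t := Summable.le_tsum hs 0 (fun k _ =>
        mul_nonneg (cseq_pos hq0 hq1 hc k).le (pow_nonneg ht0 k))

lemma Sq_le_one_add (hq0 : 0 < q) (hq1 : q < 1) (hc : 0 ≤ c) {M t s : ℝ}
    (hM : ∀ k, cseq q c k ≤ M)
    (ht0 : 0 ≤ t) (ht1 : t < 1) (hs0 : 0 ≤ s) (hst : s ≤ t) :
    Sq q c s ≤ 1 + (M / (1 - t)) * s := by
  have hM1 : (1:ℝ) ≤ M := by
    have := hM 0
    rwa [cseq_zero] at this
  have hs1 : s < 1 := lt_of_le_of_lt hst ht1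
  have hsum := summable_cseq hq0 hq1 hc hs0 hs1
  have htail : Summable (fun k : ℕ => cseq q c (k + 1) * s ^ (k + 1)) :=
    (summable_nat_add_iff 1).mpr hsum
  have hgeo : Summable (fun k : ℕ => M * s * t ^ k) :=
    (summable_geometric_of_lt_one ht0 ht1).mul_left (M * s)
  have hle : (∑' k : ℕ, cseq q c (k + 1) * s ^ (k + 1)) ≤ ∑' k : ℕ, M * s * t ^ k := by
    apply Summable.tsum_le_tsum _ htail hgeo
    intro k
    have h1 : cseq q c (k + 1) ≤ M := hM (k + 1)
    have h2 : s ^ k ≤ t ^ k := pow_le_pow_left₀ hs0 hst k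
    have h3 : (0:ℝ) ≤ s ^ k := pow_nonneg hs0 k
    have h4 : (0:ℝ) < cseq q c (k + 1) := cseq_pos hq0 hq1 hc (k + 1)
    calc cseq q c (k + 1) * s ^ (k + 1) = (cseq q c (k + 1) * s ^ k) * s := by ring
      _ ≤ (M * t ^ k) * s := by
          have h5 : cseq q c (k + 1) * s ^ k ≤ M * t ^ k :=
            mul_le_mul h1 h2 h3 (by linarith)
          exact mul_le_mul_of_nonneg_right h5 hs0
      _ = M * s * t ^ k := by ring
  have hgeo_sum : (∑' k : ℕ, M * s * t ^ k) = M * s / (1 - t) := by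
    rw [tsum_mul_left, tsum_geometric_of_lt_one ht0 ht1]
    field_simp
  have hsplit : Sq q c s = 1 + ∑' k : ℕ, cseq q c (k + 1) * s ^ (k + 1) := by
    rw [Sq, Summable.tsum_eq_zero_add hsum]
    simp [cseq_zero]
  rw [hsplit]
  have hfin : (∑' k : ℕ, cseq q c (k + 1) * s ^ (k + 1)) ≤ M * s / (1 - t) :=
    hgeo_sum ▸ hle
  have : M * s / (1 - t) = M / (1 - t) * s := by ring
  linarith

end core2


section core3
variable {q c : ℝ}

lemma Sq_funeq (hq0 : 0 < q) (hq1 : q < 1) (hc : 0 ≤ c) {t : ℝ}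
    (ht0 : 0 ≤ t) (ht1 : t < 1) :
    (1 - t) * Sq q c t = (1 - (-c) * t) * Sq q c (q * t) := by
  have hqt0 : 0 ≤ q * t := mul_nonneg hq0.le ht0
  have hqt1 : q * t < 1 := by nlinarith
  have hf : Summable (fun k : ℕ => cseq q c k * t ^ k) := summable_cseq hq0 hq1 hc ht0 ht1
  have hg : Summable (fun k : ℕ => cseq q c k * (q * t) ^ k) :=
    summable_cseq hq0 hq1 hc hqt0 hqt1
  -- auxiliary summable families
  have hf' : Summable (fun k : ℕ => cseq q c k * t ^ (k + 1)) := by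
    apply (hf.mul_left t).congr
    intro k; ring
  have hg' : Summable (fun k : ℕ => c * (cseq q c k * q ^ k * t ^ (k + 1))) := by
    apply ((hg.mul_left c).mul_left t).congr
    intro k; rw [mul_pow]; ring
  -- rewrite both sides
  have lhs_eq : (1 - t) * Sq q c t
      = (∑' k : ℕ, cseq q c k * t ^ k) - ∑' k : ℕ, cseq q c k * t ^ (k + 1) := by
    rw [Sq, sub_mul, one_mul, ← tsum_mul_left]
    congr 1
    exact tsum_congr fun k => by ring
  have rhs_eq : (1 - (-c) * t) * Sq q c (q * t)
      = (∑' k : ℕ, cseq q c k * (q * t) ^ k)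
        + ∑' k : ℕ, c * (cseq q c k * q ^ k * t ^ (k + 1)) := by
    rw [Sq, sub_mul, one_mul, ← tsum_mul_left, sub_eq_add_neg]
    congr 1
    rw [← tsum_neg]
    exact tsum_congr fun k => by rw [mul_pow]; ring
  rw [lhs_eq, rhs_eq]
  have key : (∑' k : ℕ, cseq q c k * t ^ k) - (∑' k : ℕ, cseq q c k * (q * t) ^ k)
      = (∑' k : ℕ, cseq q c k * t ^ (k + 1))
        + ∑' k : ℕ, c * (cseq q c k * q ^ k * t ^ (k + 1)) := by
    rw [← Summable.tsum_sub hf hg, ← Summable.tsum_add hf' hg']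
    rw [Summable.tsum_eq_zero_add (hf.sub hg)]
    have h0 : cseq q c 0 * t ^ 0 - cseq q c 0 * (q * t) ^ 0 = 0 := by simp
    rw [h0, zero_add]
    exact tsum_congr fun k => by linear_combination t ^ (k + 1) * cseq_rec (c := c) hq0 hq1 k
  linarith

end core3


section core4
variable {q c : ℝ}

lemma Sq_iter (hq0 : 0 < q) (hq1 : q < 1) (hc : 0 ≤ c) {t : ℝ}
    (ht0 : 0 ≤ t) (ht1 : t < 1) (m : ℕ) :
    Sq q c t = (∏ i ∈ range m, (1 - (-(c * t)) * q ^ i))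
      / (∏ i ∈ range m, (1 - t * q ^ i)) * Sq q c (q ^ m * t) := by
  induction m with
  | zero => simp
  | succ m ih =>
    have htm0 : 0 ≤ q ^ m * t := mul_nonneg (pow_pos hq0 m).le ht0
    have htm1 : q ^ m * t < 1 := by
      nlinarith [pow_pos hq0 m, pow_le_one₀ hq0.le hq1.le (n := m)]
    have hfe := Sq_funeq hq0 hq1 hc htm0 htm1
    have hden : (0:ℝ) < 1 - (q ^ m * t) := by linarith
    have hdenm : (0:ℝ) < ∏ i ∈ range m, (1 - t * q ^ i) := by
      apply Finset.prod_pos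
      intro i _
      nlinarith [pow_pos hq0 i, pow_le_one₀ hq0.le hq1.le (n := i)]
    have hstep : Sq q c (q ^ m * t)
        = (1 - (-(c * t)) * q ^ m) / (1 - t * q ^ m) * Sq q c (q ^ (m + 1) * t) := by
      have h1 : (1 - q ^ m * t) * Sq q c (q ^ m * t)
          = (1 - -c * (q ^ m * t)) * Sq q c (q * (q ^ m * t)) := hfe
      have h2 : q * (q ^ m * t) = q ^ (m + 1) * t := by ring
      rw [h2] at h1
      have h3 : (1:ℝ) - t * q ^ m ≠ 0 := by
        have : (0:ℝ) < 1 - q ^ m * t := hden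
        intro h; rw [mul_comm t] at h; linarith
      rw [div_mul_eq_mul_div, eq_div_iff h3]
      linear_combination h1
    rw [ih, hstep, Finset.prod_range_succ, Finset.prod_range_succ]
    field_simp

end core4


section core5
variable {q c : ℝ}

lemma Sq_eq (hq0 : 0 < q) (hq1 : q < 1) (hc : 0 ≤ c) {t : ℝ}
    (ht0 : 0 ≤ t) (ht1 : t < 1) :
    Sq q c t = (∏' i : ℕ, (1 - (-(c * t)) * q ^ i)) / (∏' i : ℕ, (1 - t * q ^ i)) := by
  have hct : -(c * t) < 1 := by nlinarith
  have hA : Tendsto (fun m => ∏ i ∈ range m, (1 - (-(c * t)) * q ^ i)) atTop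
      (nhds (∏' i : ℕ, (1 - (-(c * t)) * q ^ i))) := tendsto_partial_prod hq0 hq1 hct
  have hB : Tendsto (fun m => ∏ i ∈ range m, (1 - t * q ^ i)) atTop
      (nhds (∏' i : ℕ, (1 - t * q ^ i))) := tendsto_partial_prod hq0 hq1 ht1
  have hB0 : 0 < ∏' i : ℕ, (1 - t * q ^ i) := qPochInfR_pos' hq0 hq1 ht1
  set C := (∏' i : ℕ, (1 - (-c) * q ^ i)) / (∏' i : ℕ, (1 - q * q ^ i)) / (1 - t) with hC
  have hS : Tendsto (fun m => Sq q c (q ^ m * t)) atTop (nhds 1) := by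
    have hq : Tendsto (fun m : ℕ => q ^ m) atTop (nhds 0) :=
      tendsto_pow_atTop_nhds_zero_of_lt_one hq0.le hq1
    have hup : Tendsto (fun m : ℕ => 1 + C * (q ^ m * t)) atTop (nhds 1) := by
      have := ((hq.mul_const t).const_mul C).const_add 1
      simpa using this
    apply tendsto_of_tendsto_of_tendsto_of_le_of_le (tendsto_const_nhds) hup
    · intro m
      have h0 : 0 ≤ q ^ m * t := mul_nonneg (pow_pos hq0 m).le ht0
      have h1 : q ^ m * t < 1 := by
        nlinarith [pow_pos hq0 m, pow_le_one₀ hq0.le hq1.le (n := m)]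
      exact Sq_ge_one hq0 hq1 hc h0 h1
    · intro m
      have h0 : 0 ≤ q ^ m * t := mul_nonneg (pow_pos hq0 m).le ht0
      have h2 : q ^ m * t ≤ t := by
        nlinarith [pow_pos hq0 m, pow_le_one₀ hq0.le hq1.le (n := m)]
      exact Sq_le_one_add hq0 hq1 hc (cseq_le hq0 hq1 hc) ht0 ht1 h0 h2
  have hmain : Tendsto (fun m => (∏ i ∈ range m, (1 - (-(c * t)) * q ^ i))
      / (∏ i ∈ range m, (1 - t * q ^ i)) * Sq q c (q ^ m * t)) atTop
      (nhds ((∏' i : ℕ, (1 - (-(c * t)) * q ^ i)) / (∏' i : ℕ, (1 - t * q ^ i)) * 1)) :=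
    (hA.div hB hB0.ne').mul hS
  have hconst : (fun m => (∏ i ∈ range m, (1 - (-(c * t)) * q ^ i))
      / (∏ i ∈ range m, (1 - t * q ^ i)) * Sq q c (q ^ m * t)) = fun _ => Sq q c t := by
    funext m
    exact (Sq_iter hq0 hq1 hc ht0 ht1 m).symm
  rw [hconst] at hmain
  have := tendsto_nhds_unique hmain tendsto_const_nhds
  rw [← this, mul_one]

end core5



section cx
variable {q : ℝ}

lemma abs_qPoch_le (hq0 : 0 < q) (b : ℂ) (k : ℕ) :
    ‖qPoch (q : ℂ) b k‖
      ≤ ∏ i ∈ range k, (1 - (-(‖b‖)) * q ^ i) := by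
  rw [qPoch, norm_prod]
  apply Finset.prod_le_prod (fun i _ => (norm_nonneg _)) (fun i _ => ?_)
  calc ‖1 - b * (q:ℂ) ^ i‖ ≤ ‖(1:ℂ)‖ + ‖b * (q:ℂ) ^ i‖ := norm_sub_le _ _
    _ = 1 + ‖b‖ * q ^ i := by
        rw [norm_one, norm_mul, norm_pow, Complex.norm_real, Real.norm_eq_abs,
          abs_of_pos hq0]
    _ = 1 - (-(‖b‖)) * q ^ i := by ring

lemma abs_qPoch_ge (hq0 : 0 < q) (hq1 : q < 1) (b : ℂ) (k : ℕ) (hb : ‖b‖ ≤ 1) :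
    ∏ i ∈ range k, (1 - ‖b‖ * q ^ i) ≤ ‖qPoch (q : ℂ) b k‖ := by
  rw [qPoch, norm_prod]
  apply Finset.prod_le_prod (fun i _ => ?_) (fun i _ => ?_)
  · have h1 : q ^ i ≤ 1 := pow_le_one₀ hq0.le hq1.le
    nlinarith [norm_nonneg b, pow_pos hq0 i]
  · calc 1 - ‖b‖ * q ^ i = ‖(1:ℂ)‖ - ‖b * (q:ℂ) ^ i‖ := by
          rw [norm_one, norm_mul, norm_pow, Complex.norm_real, Real.norm_eq_abs,
            abs_of_pos hq0]
      _ ≤ ‖1 - b * (q:ℂ) ^ i‖ := norm_sub_norm_le _ _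

end cx


end auxQB

open Finset Filter

/-- Uniform bound for shifted basic hypergeometric series. -/

theorem shifted_basic_hypergeometric_bound (q : ℝ) (hq0 : 0 < q) (hq1 : q < 1)
    (r : ℕ) (hr : 1 ≤ r) (a x : ℂ) (A B : Fin r → ℂ) (n : ℕ)
    (hB : ∀ j, ‖B j‖ < 1) (hx : ‖x‖ < 1) :
    ‖∑' k : ℕ,
        qPoch (q : ℂ) a k * (∏ j, qPoch (q : ℂ) (A j * (q : ℂ) ^ n) k) * x ^ k /
          (qPoch (q : ℂ) (q : ℂ) k * ∏ j, qPoch (q : ℂ) (B j * (q : ℂ) ^ n) k)‖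
    ≤ qPochInfR q (-‖a * x‖) * (∏ j, qPochInfR q (-‖A j‖)) /
        (qPochInfR q (‖x‖) * ∏ j, qPochInfR q (‖B j‖)) := by
  have hqn1 : q ^ n ≤ 1 := pow_le_one₀ hq0.le hq1.le
  have hqn0 : 0 < q ^ n := pow_pos hq0 n
  set t := ‖x‖ with ht_def
  have ht0 : 0 ≤ t := norm_nonneg x
  have ht1 : t < 1 := hx
  set ca := ‖a‖ with hca_def
  have hca : 0 ≤ ca := norm_nonneg a
  set N := ∏ j, (∏' i : ℕ, (1 - (-(‖A j‖)) * q ^ i)) with hN_def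
  set D := ∏ j, (∏' i : ℕ, (1 - ‖B j‖ * q ^ i)) with hD_def
  have hNj_pos : ∀ j, (0:ℝ) < ∏' i : ℕ, (1 - (-(‖A j‖)) * q ^ i) :=
    fun j => qPochInfR_pos' hq0 hq1 (by nlinarith [norm_nonneg (A j)])
  have hDj_pos : ∀ j, (0:ℝ) < ∏' i : ℕ, (1 - ‖B j‖ * q ^ i) :=
    fun j => qPochInfR_pos' hq0 hq1 (hB j)
  have hN_pos : 0 < N := Finset.prod_pos fun j _ => hNj_pos j
  have hD_pos : 0 < D := Finset.prod_pos fun j _ => hDj_pos j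
  set f : ℕ → ℂ := fun k =>
    qPoch (q : ℂ) a k * (∏ j, qPoch (q : ℂ) (A j * (q : ℂ) ^ n) k) * x ^ k /
      (qPoch (q : ℂ) (q : ℂ) k * ∏ j, qPoch (q : ℂ) (B j * (q : ℂ) ^ n) k) with hf_def
  have habs_shift : ∀ (z : ℂ), ‖z * (q:ℂ) ^ n‖ = ‖z‖ * q ^ n := by
    intro z
    rw [norm_mul, norm_pow, Complex.norm_real, Real.norm_eq_abs, abs_of_pos hq0]
  -- termwise bound
  have hbound : ∀ k, ‖f k‖ ≤ N / D * (cseq q ca k * t ^ k) := by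
    intro k
    have hPden_pos : (0:ℝ) < ∏ i ∈ range k, (1 - q * q ^ i) := den_pos hq0 hq1 k
    rw [hf_def]
    rw [norm_div, norm_mul, norm_mul, norm_mul, norm_pow, norm_prod,
      norm_prod]
    have h1 : ‖qPoch (q:ℂ) a k‖ ≤ ∏ i ∈ range k, (1 - (-ca) * q ^ i) :=
      abs_qPoch_le hq0 a k
    have h2 : (∏ j, ‖qPoch (q:ℂ) (A j * (q:ℂ) ^ n) k‖) ≤ N := by
      apply Finset.prod_le_prod (fun j _ => norm_nonneg _) (fun j _ => ?_)
      calc ‖qPoch (q:ℂ) (A j * (q:ℂ) ^ n) k‖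
          ≤ ∏ i ∈ range k, (1 - (-(‖A j * (q:ℂ) ^ n‖)) * q ^ i) :=
            abs_qPoch_le hq0 _ k
        _ ≤ ∏ i ∈ range k, (1 - (-(‖A j‖)) * q ^ i) := by
            apply Finset.prod_le_prod (fun i _ => ?_) (fun i _ => ?_)
            · have h5 := mul_nonneg (norm_nonneg (A j * (q:ℂ) ^ n))
                (pow_pos hq0 i).le
              linarith
            · rw [habs_shift (A j)]
              have h5 := mul_nonneg (mul_nonneg (norm_nonneg (A j))
                (sub_nonneg.mpr hqn1)) (pow_pos hq0 i).le
              nlinarith [h5]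
        _ ≤ ∏' i : ℕ, (1 - (-(‖A j‖)) * q ^ i) :=
            partial_le_tprod hq0 hq1 (by nlinarith [norm_nonneg (A j)]) k
    have h3 : (∏ i ∈ range k, (1 - q * q ^ i)) ≤ ‖qPoch (q:ℂ) (q:ℂ) k‖ := by
      have := abs_qPoch_ge hq0 hq1 ((q:ℂ)) k
        (by rw [Complex.norm_real, Real.norm_eq_abs, abs_of_pos hq0]; exact hq1.le)
      rwa [Complex.norm_real, Real.norm_eq_abs, abs_of_pos hq0] at this
    have h4 : D ≤ ∏ j, ‖qPoch (q:ℂ) (B j * (q:ℂ) ^ n) k‖ := by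
      apply Finset.prod_le_prod (fun j _ => (hDj_pos j).le) (fun j _ => ?_)
      calc (∏' i : ℕ, (1 - ‖B j‖ * q ^ i))
          ≤ ∏ i ∈ range k, (1 - ‖B j‖ * q ^ i) :=
            tprod_le_partial hq0 hq1 (norm_nonneg _) (hB j) k
        _ ≤ ∏ i ∈ range k, (1 - ‖B j * (q:ℂ) ^ n‖ * q ^ i) := by
            apply Finset.prod_le_prod (fun i _ => ?_) (fun i _ => ?_)
            · have h5 := mul_le_mul_of_nonneg_left (pow_le_one₀ hq0.le hq1.le (n := i))
                (norm_nonneg (B j))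
              have h6 := hB j
              linarith [mul_one (‖B j‖) ▸ h5]
            · rw [habs_shift (B j)]
              have h5 := mul_nonneg (mul_nonneg (norm_nonneg (B j))
                (sub_nonneg.mpr hqn1)) (pow_pos hq0 i).le
              nlinarith [h5]
        _ ≤ ‖qPoch (q:ℂ) (B j * (q:ℂ) ^ n) k‖ := by
            apply abs_qPoch_ge hq0 hq1
            rw [habs_shift (B j)]
            nlinarith [norm_nonneg (B j), hB j]
    have hnum_nonneg : (0:ℝ) ≤ (∏ i ∈ range k, (1 - (-ca) * q ^ i)) * N * t ^ k := by
      have := num_pos hq0 hca k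
      positivity
    have habs_pow : ‖x‖ ^ k = t ^ k := rfl
    have hstep : ‖qPoch (q:ℂ) a k‖
          * (∏ j, ‖qPoch (q:ℂ) (A j * (q:ℂ) ^ n) k‖) * ‖x‖ ^ k /
          (‖qPoch (q:ℂ) (q:ℂ) k‖
            * ∏ j, ‖qPoch (q:ℂ) (B j * (q:ℂ) ^ n) k‖)
        ≤ ((∏ i ∈ range k, (1 - (-ca) * q ^ i)) * N * t ^ k)
          / ((∏ i ∈ range k, (1 - q * q ^ i)) * D) := by
      apply div_le_div₀ hnum_nonneg ?_ (by positivity) ?_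
      · rw [habs_pow]
        apply mul_le_mul (mul_le_mul h1 h2 ?_ ?_) (le_refl _) (by positivity) ?_
        · exact Finset.prod_nonneg fun j _ => norm_nonneg _
        · exact le_trans (norm_nonneg _) h1
        · have := num_pos hq0 hca k
          positivity
      · apply mul_le_mul h3 h4 hD_pos.le (le_trans hPden_pos.le h3)
    apply le_trans hstep
    apply le_of_eq
    rw [cseq]
    field_simp
  -- summability
  have hsum_bound : Summable (fun k => N / D * (cseq q ca k * t ^ k)) :=
    (summable_cseq hq0 hq1 hca ht0 ht1).mul_left _
  have hsum_norm : Summable (fun k => ‖f k‖) :=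
    Summable.of_nonneg_of_le (fun k => norm_nonneg _) hbound hsum_bound
  have step1 : ‖∑' k, f k‖ ≤ ∑' k, ‖f k‖ := by
    exact norm_tsum_le_tsum_norm hsum_norm
  have step2 : (∑' k, ‖f k‖) ≤ ∑' k, N / D * (cseq q ca k * t ^ k) :=
    Summable.tsum_le_tsum hbound hsum_norm hsum_bound
  have step3 : (∑' k, N / D * (cseq q ca k * t ^ k)) = N / D * Sq q ca t := by
    rw [tsum_mul_left]; rfl
  have step4 : Sq q ca t
      = (∏' i : ℕ, (1 - (-(ca * t)) * q ^ i)) / (∏' i : ℕ, (1 - t * q ^ i)) :=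
    Sq_eq hq0 hq1 hca ht0 ht1
  have hBt_pos : (0:ℝ) < ∏' i : ℕ, (1 - t * q ^ i) := qPochInfR_pos' hq0 hq1 ht1
  have hfinal : N / D * Sq q ca t
      = qPochInfR q (-‖a * x‖) * (∏ j, qPochInfR q (-‖A j‖)) /
        (qPochInfR q (‖x‖) * ∏ j, qPochInfR q (‖B j‖)) := by
    rw [step4]
    have habs_ax : ‖a * x‖ = ca * t := norm_mul a x
    simp only [qPochInfR, habs_ax, hN_def, hD_def]
    rw [← ht_def]
    field_simp
  calc ‖∑' k, f k‖ ≤ ∑' k, ‖f k‖ := step1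
    _ ≤ ∑' k, N / D * (cseq q ca k * t ^ k) := step2
    _ = N / D * Sq q ca t := step3
    _ = _ := hfinal
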